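/- Let n be prime and β of order n in a field F with n invertible. For the n² × n² binary matrix M = [CPM(β^{ij})]_{0≤i,j<n} (the CPM-dispersion of the full Vandermonde matrix V), any two distinct columns of M share at most one common 1-position. -/

import Mathlib

/-!
Over `ZMod n` the column `(j, b)` of `M` is incident with the row `(i, a)` exactly when
`b = a + i * j`. If two rows `(i, a)`, `(i', a')` meet both columns `(j, b)`, `(j', b')`, subtracting
gives `(i - i') * (j - j') = 0`; since `ZMod n` is a field for prime `n`, either the columns lie in the
same block column (and then coincide) or `i = i'`, and then `a = a'`.
-/

def AffineIncident {R : Type*} [Add R] [Mul R] (r c : R × R) : Prop :=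
  c.2 = r.2 + r.1 * c.1

theorem affineIncident_subsingleton {R : Type*} [CommRing R] [IsDomain R] {c c' : R × R}
    (hc : c ≠ c') : {r : R × R | AffineIncident r c ∧ AffineIncident r c'}.Subsingleton := by
  obtain ⟨j, b⟩ := c
  obtain ⟨j', b'⟩ := c'
  rintro ⟨i, a⟩ ⟨e₁, e₂⟩ ⟨i', a'⟩ ⟨e₃, e₄⟩
  simp only [AffineIncident] at e₁ e₂ e₃ e₄
  have hj : j - j' ≠ 0 := by
    rintro hj
    obtain rfl : j = j' := sub_eq_zero.mp hj
    exact hc (by rw [e₁, e₂])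
  have hi : i = i' := by
    have hmul : (i - i') * (j - j') = 0 := by linear_combination e₂ - e₁ + e₃ - e₄
    exact sub_eq_zero.mp ((mul_eq_zero.mp hmul).resolve_right hj)
  subst hi
  have ha : a = a' := by linear_combination e₃ - e₁
  rw [ha]

theorem Fin.natCast_zmod_injective (n : ℕ) :
    Function.Injective (fun x : Fin n => ((x : ℕ) : ZMod n)) := by
  intro x y h
  rw [ZMod.natCast_eq_natCast_iff', Nat.mod_eq_of_lt x.isLt, Nat.mod_eq_of_lt y.isLt] at h
  exact Fin.ext h

theorem cpm_entry_eq_one_iff {n : ℕ} (a i j b : Fin n) :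
    ((if (b : ℕ) = ((a : ℕ) + (i : ℕ) * (j : ℕ)) % n then 1 else 0 : ZMod 2) = 1) ↔
      (((b : ℕ) : ZMod n) = (a : ℕ) + (i : ℕ) * (j : ℕ)) := by
  rw [← Nat.cast_mul, ← Nat.cast_add, ZMod.natCast_eq_natCast_iff', Nat.mod_eq_of_lt b.isLt]
  split_ifs with h <;> simp [h]

theorem vandermonde_cpm_dispersion_rc_constraint_general
    (n : ℕ) (hn : n.Prime)
    (M : Matrix (Fin n × Fin n) (Fin n × Fin n) (ZMod 2))
    (hM : ∀ (i : Fin n) (a : Fin n) (j : Fin n) (b : Fin n),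
      M (i, a) (j, b) = if (b : ℕ) = ((a : ℕ) + (i : ℕ) * (j : ℕ)) % n then 1 else 0) :
    ∀ c c' : Fin n × Fin n, c ≠ c' →
      (Finset.univ.filter
        (fun r : Fin n × Fin n => M r c = 1 ∧ M r c' = 1)).card ≤ 1 := by
  have : Fact n.Prime := ⟨hn⟩
  set φ := Prod.map (fun x : Fin n => ((x : ℕ) : ZMod n)) (fun x : Fin n => ((x : ℕ) : ZMod n))
  have hφ : Function.Injective φ :=
    (Fin.natCast_zmod_injective n).prodMap (Fin.natCast_zmod_injective n)
  have incident_iff (r c : Fin n × Fin n) : M r c = 1 ↔ AffineIncident (φ r) (φ c) := by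
    rw [hM, cpm_entry_eq_one_iff]
    rfl
  intro c c' hc
  rw [Finset.card_le_one]
  intro r hr r' hr'
  simp only [Finset.mem_filter, Finset.mem_univ, true_and, incident_iff] at hr hr'
  exact hφ (affineIncident_subsingleton (hφ.ne hc) hr hr')

/-- For a prime `n`, the `n² × n²` binary CPM-dispersion
`M = [CPM(β^{ij})]_{0≤i,j<n}` of the full Vandermonde matrix (block `(i,j)` has `(a,b)`
entry `1` iff `b ≡ a + i·j (mod n)`) satisfies the RC-constraint: any two distinct
columns of `M` share at most one common 1-position. -/
theorem vandermonde_cpm_dispersion_rc_constraint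
    (F : Type*) [Field F] (n : ℕ) (hn : n.Prime)
    (β : F) (hβ : orderOf β = n) (hninv : (n : F) ≠ 0)
    (M : Matrix (Fin n × Fin n) (Fin n × Fin n) (ZMod 2))
    (hM : ∀ (i : Fin n) (a : Fin n) (j : Fin n) (b : Fin n),
      M (i, a) (j, b) = if (b : ℕ) = ((a : ℕ) + (i : ℕ) * (j : ℕ)) % n then 1 else 0) :
    ∀ c c' : Fin n × Fin n, c ≠ c' →
      (Finset.univ.filter
        (fun r : Fin n × Fin n => M r c = 1 ∧ M r c' = 1)).card ≤ 1 :=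
  vandermonde_cpm_dispersion_rc_constraint_general n hn M hM
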